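/- Let (X, ‖·‖) be a Banach space with Fréchet differentiable norm away from the origin, p > 1, {x_i}_{i=0}^∞ a convergent sequence in X, and {δ_i}_{i=0}^∞ nonnegative reals with Σ_{i=0}^∞ δ_i < ∞. Then g(x) = Σ_{i=0}^∞ δ_i ‖x − x_i‖^p is Fréchet differentiable at every point of X. -/
import Mathlib

open Filter Metric

lemma normRpowKey {X : Type*} [NormedAddCommGroup X] [NormedSpace ℝ X]
    (hnorm : ∀ x : X, x ≠ 0 → DifferentiableAt ℝ (fun y : X => ‖y‖) x)
    {p : ℝ} (hp : 1 < p) (x : X) :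
    ∃ L : X →L[ℝ] ℝ, HasFDerivAt (fun y : X => ‖y‖ ^ p) L x ∧ ‖L‖ ≤ p * ‖x‖ ^ (p - 1) := by
  have hne : p - 1 ≠ 0 := (by linarith : (0:ℝ) < p - 1).ne'
  have hpne : p ≠ 0 := (by linarith : (0:ℝ) < p).ne'
  rcases eq_or_ne x 0 with rfl | hx
  · refine ⟨0, ?_, by simp [Real.zero_rpow hne]⟩
    rw [hasFDerivAt_iff_isLittleO_nhds_zero]
    simp only [zero_add, norm_zero, Real.zero_rpow hpne,
      ContinuousLinearMap.zero_apply, sub_zero]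
    rw [Asymptotics.isLittleO_iff]
    intro ε hε
    have hcont : Filter.Tendsto (fun y : X => ‖y‖ ^ (p - 1)) (nhds 0) (nhds 0) := by
      have h1 : Filter.Tendsto (fun y : X => ‖y‖) (nhds 0) (nhds 0) := by
        simpa using (continuous_norm (E := X)).tendsto 0
      have h2 : Filter.Tendsto (fun t : ℝ => t ^ (p - 1)) (nhds 0) (nhds 0) := by
        have := (Real.continuousAt_rpow_const 0 (p - 1) (Or.inr (by linarith))).tendsto
        rwa [Real.zero_rpow hne] at this
      exact h2.comp h1
    filter_upwards [hcont (Metric.ball_mem_nhds 0 hε)] with y hy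
    have hy' : ‖y‖ ^ (p - 1) ≤ ε := by
      have := mem_ball_iff_norm.mp hy
      rw [Real.norm_eq_abs] at this
      calc ‖y‖ ^ (p - 1) ≤ |‖y‖ ^ (p - 1)| := le_abs_self _
        _ ≤ ε := by simpa using this.le
    have : ‖y‖ ^ p = ‖y‖ ^ (p - 1) * ‖y‖ := by
      rcases eq_or_ne y 0 with rfl | hy0
      · simp [Real.zero_rpow hpne]
      · rw [← Real.rpow_add_one (by simpa using hy0) (p - 1)]
        ring_nf
    rw [Real.norm_eq_abs, abs_of_nonneg (by positivity), this]
    exact mul_le_mul_of_nonneg_right hy' (norm_nonneg _)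
  · have hd : HasFDerivAt (fun y : X => ‖y‖) (fderiv ℝ (fun y : X => ‖y‖) x) x :=
      (hnorm x hx).hasFDerivAt
    have hr : HasDerivAt (fun t : ℝ => t ^ p) (p * ‖x‖ ^ (p - 1)) ‖x‖ := by
      simpa [mul_comm] using Real.hasDerivAt_rpow_const (x := ‖x‖) (p := p) (Or.inr hp.le)
    refine ⟨(p * ‖x‖ ^ (p - 1)) • fderiv ℝ (fun y : X => ‖y‖) x, ?_, ?_⟩
    · exact hr.comp_hasFDerivAt x hd
    · have hle : ‖fderiv ℝ (fun y : X => ‖y‖) x‖ ≤ 1 := by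
        simpa using norm_fderiv_le_of_lipschitz ℝ (lipschitzWith_one_norm : LipschitzWith 1 fun y : X => ‖y‖) (x₀ := x)
      calc ‖(p * ‖x‖ ^ (p - 1)) • fderiv ℝ (fun y : X => ‖y‖) x‖
          = |p * ‖x‖ ^ (p - 1)| * ‖fderiv ℝ (fun y : X => ‖y‖) x‖ := by
            rw [norm_smul, Real.norm_eq_abs]
        _ ≤ (p * ‖x‖ ^ (p - 1)) * 1 := by
            rw [abs_of_nonneg (by positivity)]
            exact mul_le_mul_of_nonneg_left hle (by positivity)
        _ = p * ‖x‖ ^ (p - 1) := mul_one _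

theorem stmt17 {X : Type*} [NormedAddCommGroup X] [NormedSpace ℝ X] [CompleteSpace X]
    (hnorm : ∀ x : X, x ≠ 0 → DifferentiableAt ℝ (fun y : X => ‖y‖) x)
    (p : ℝ) (hp : 1 < p)
    (x_ : ℕ → X) (xbar : X) (hconv : Filter.Tendsto x_ Filter.atTop (nhds xbar))
    (δ : ℕ → ℝ) (hδ : ∀ i, 0 ≤ δ i) (hsum : Summable δ) :
    Differentiable ℝ (fun x : X => ∑' i, δ i * ‖x - x_ i‖ ^ p) := by
  -- get a global derivative for ‖·‖^p with bound
  choose L hL hLb using normRpowKey hnorm hp (X := X)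
  -- boundedness of the sequence
  have hbdd : ∃ M : ℝ, ∀ i, ‖x_ i‖ ≤ M := by
    have : Filter.Tendsto (fun i => ‖x_ i‖) Filter.atTop (nhds ‖xbar‖) :=
      (continuous_norm.tendsto xbar).comp hconv
    obtain ⟨M, hM⟩ := this.bddAbove_range
    exact ⟨M, fun i => hM ⟨i, rfl⟩⟩
  obtain ⟨M, hM⟩ := hbdd
  have hM0 : 0 ≤ M := le_trans (norm_nonneg _) (hM 0)
  intro x0
  set R : ℝ := ‖x0‖ + 1 + M with hR
  have hR0 : 0 ≤ R := by positivity
  -- pointwise derivatives of the terms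
  have hterm : ∀ (n : ℕ) (y : X),
      HasFDerivAt (fun z : X => δ n * ‖z - x_ n‖ ^ p) (δ n • L (y - x_ n)) y := by
    intro n y
    have h1 : HasFDerivAt (fun z : X => z - x_ n) (ContinuousLinearMap.id ℝ X) y :=
      (hasFDerivAt_id y).sub_const (x_ n)
    have h2 := (hL (y - x_ n)).comp y h1
    rw [ContinuousLinearMap.comp_id] at h2
    exact h2.const_mul (δ n)
  -- bound on derivatives in the ball
  have hbound : ∀ (n : ℕ) (y : X), y ∈ ball x0 1 →
      ‖δ n • L (y - x_ n)‖ ≤ δ n * (p * R ^ (p - 1)) := by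
    intro n y hy
    have hyR : ‖y - x_ n‖ ≤ R := by
      calc ‖y - x_ n‖ = ‖(y - x0) + (x0 - x_ n)‖ := by rw [sub_add_sub_cancel]
        _ ≤ ‖y - x0‖ + ‖x0 - x_ n‖ := norm_add_le _ _
        _ ≤ 1 + (‖x0‖ + ‖x_ n‖) := add_le_add (mem_ball_iff_norm.mp hy).le (norm_sub_le _ _)
        _ ≤ 1 + (‖x0‖ + M) := by linarith [hM n]
        _ = R := by rw [hR]; ring
    calc ‖δ n • L (y - x_ n)‖ = δ n * ‖L (y - x_ n)‖ := by
          rw [norm_smul (δ n) (L (y - x_ n)), Real.norm_eq_abs, abs_of_nonneg (hδ n)]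
      _ ≤ δ n * (p * ‖y - x_ n‖ ^ (p - 1)) := mul_le_mul_of_nonneg_left (hLb _) (hδ n)
      _ ≤ δ n * (p * R ^ (p - 1)) := by
          have : ‖y - x_ n‖ ^ (p - 1) ≤ R ^ (p - 1) :=
            Real.rpow_le_rpow (norm_nonneg _) hyR (by linarith)
          exact mul_le_mul_of_nonneg_left
            (mul_le_mul_of_nonneg_left this (by linarith)) (hδ n)
  -- summability at x0
  have hsum0 : Summable (fun n => δ n * ‖x0 - x_ n‖ ^ p) := by
    apply Summable.of_nonneg_of_le
      (fun n => mul_nonneg (hδ n) (Real.rpow_nonneg (norm_nonneg _) p))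
      (fun n => ?_) (hsum.mul_right (R ^ p))
    have hx0R : ‖x0 - x_ n‖ ≤ R := by
      calc ‖x0 - x_ n‖ ≤ ‖x0‖ + ‖x_ n‖ := norm_sub_le _ _
        _ ≤ R := by rw [hR]; linarith [hM n]
    have : ‖x0 - x_ n‖ ^ p ≤ R ^ p :=
      Real.rpow_le_rpow (norm_nonneg _) hx0R (by linarith)
    exact mul_le_mul_of_nonneg_left this (hδ n)
  have := hasFDerivAt_tsum_of_isPreconnected
    (u := fun n => δ n * (p * R ^ (p - 1)))
    (hsum.mul_right (p * R ^ (p - 1)))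
    isOpen_ball (convex_ball x0 1).isPreconnected
    (fun n y hy => hterm n y) hbound
    (mem_ball_self one_pos) hsum0 (mem_ball_self one_pos)
  exact this.differentiableAt
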